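/- arXiv:1209.3168 — 5 statements merged into one kernel-verified Lean document; each statement's English description precedes it below -/
import Mathlib

section
/- Let X be a compact metric space and δ > 0. The map sending a nonempty compact subset K of X to N_δ(K), the smallest number of open sets of diameter at most δ needed to cover K, is upper semicontinuous with respect to the Hausdorff metric on the space of nonempty compact subsets of X. -/
open Set Metric Filter MeasureTheory TopologicalSpace

noncomputable def coveringNumber {X : Type*} [MetricSpace X] (δ : ℝ) (F : Set X) : ℕ∞ :=
  sInf {m : ℕ∞ | ∃ C : Finset (Set X), (C.card : ℕ∞) = m ∧
    (∀ U ∈ C, IsOpen U ∧ Metric.diam U ≤ δ) ∧ F ⊆ ⋃ U ∈ C, U}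

noncomputable def packingNumber {X : Type*} [MetricSpace X] (δ : ℝ) (F : Set X) : ℕ∞ :=
  sSup {m : ℕ∞ | ∃ S : Finset X, (S.card : ℕ∞) = m ∧ (↑S : Set X) ⊆ F ∧
    (S : Set X).Pairwise fun x y => Disjoint (Metric.closedBall x δ) (Metric.closedBall y δ)}

noncomputable def upperBoxDim {X : Type*} [MetricSpace X] (F : Set X) : ℝ :=
  Filter.limsup (fun δ : ℝ => Real.log ((coveringNumber δ F).toNat) / (-Real.log δ))
    (nhdsWithin 0 (Set.Ioi 0))

noncomputable def lowerBoxDim {X : Type*} [MetricSpace X] (F : Set X) : ℝ :=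
  Filter.liminf (fun δ : ℝ => Real.log ((coveringNumber δ F).toNat) / (-Real.log δ))
    (nhdsWithin 0 (Set.Ioi 0))

noncomputable def packingDim {X : Type*} [MetricSpace X] (F : Set X) : ℝ :=
  sInf {s : ℝ | ∃ E : ℕ → Set X, F ⊆ ⋃ i, E i ∧ ∀ i, upperBoxDim (E i) ≤ s}

noncomputable def covDim (Y : Type*) [TopologicalSpace Y] : ℕ∞ :=
  sInf {m : ℕ∞ | ∀ (ι : Type) (U : ι → Set Y), (∀ i, IsOpen (U i)) → (⋃ i, U i) = Set.univ →
    ∃ (κ : Type) (V : κ → Set Y), (∀ j, IsOpen (V j)) ∧ (⋃ j, V j) = Set.univ ∧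
      (∀ j, ∃ i, V j ⊆ U i) ∧ ∀ y : Y, ENat.card {j : κ // y ∈ V j} ≤ m + 1}

/-!
A cover of `K` by finitely many open sets of diameter at most `δ` has open union `W ⊇ K`.
Since `K` is compact, some thickening of `K` still lies in `W`, so every compact set
Hausdorff-close to `K` is covered by the same sets, and its covering number can only be smaller.
-/

open Topology

section CoveringNumber

variable {X : Type*} [MetricSpace X] {δ : ℝ} {F : Set X}

theorem coveringNumber_le_card {C : Finset (Set X)} (hC : ∀ U ∈ C, IsOpen U ∧ diam U ≤ δ)
    (hFC : F ⊆ ⋃ U ∈ C, U) : coveringNumber δ F ≤ C.card :=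
  sInf_le ⟨C, rfl, hC, hFC⟩

theorem exists_cover_card_lt_of_coveringNumber_lt {y : ℕ∞} (hy : coveringNumber δ F < y) :
    ∃ C : Finset (Set X), (∀ U ∈ C, IsOpen U ∧ diam U ≤ δ) ∧ F ⊆ ⋃ U ∈ C, U ∧
      (C.card : ℕ∞) < y := by
  obtain ⟨_, ⟨C, rfl, hC, hFC⟩, hCy⟩ := sInf_lt_iff.mp hy
  exact ⟨C, hC, hFC, hCy⟩

end CoveringNumber

namespace TopologicalSpace.NonemptyCompacts

variable {X : Type*} [MetricSpace X]

theorem subset_thickening_of_dist_lt {K L : NonemptyCompacts X} {ε : ℝ} (h : dist L K < ε) :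
    (L : Set X) ⊆ thickening ε K := fun _ hx =>
  (mem_thickening_iff_infDist_lt K.nonempty).mpr <|
    (infDist_le_hausdorffDist_of_mem hx <|
      hausdorffEDist_ne_top_of_nonempty_of_bounded L.nonempty K.nonempty
        L.isCompact.isBounded K.isCompact.isBounded).trans_lt h

theorem eventually_subset_of_isOpen {K : NonemptyCompacts X} {W : Set X} (hW : IsOpen W)
    (hKW : (K : Set X) ⊆ W) : ∀ᶠ L : NonemptyCompacts X in 𝓝 K, (L : Set X) ⊆ W := by
  obtain ⟨ε, hε, hεW⟩ := K.isCompact.exists_thickening_subset_open hW hKW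
  filter_upwards [ball_mem_nhds K hε] with L hL
  exact (subset_thickening_of_dist_lt hL).trans hεW

end TopologicalSpace.NonemptyCompacts

theorem stmt0_general {X : Type*} [MetricSpace X] (δ : ℝ) :
    UpperSemicontinuous
      (fun K : TopologicalSpace.NonemptyCompacts X => coveringNumber δ (K : Set X)) := by
  intro K y hy
  obtain ⟨C, hC, hKC, hCy⟩ := exists_cover_card_lt_of_coveringNumber_lt hy
  have hW : IsOpen (⋃ U ∈ C, U) := isOpen_biUnion fun U hU => (hC U hU).1
  filter_upwards [K.eventually_subset_of_isOpen hW hKC] with L hL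
  exact (coveringNumber_le_card hC hL).trans_lt hCy

theorem stmt0 {X : Type*} [MetricSpace X] [CompactSpace X] (δ : ℝ) (hδ : 0 < δ) :
    UpperSemicontinuous
      (fun K : TopologicalSpace.NonemptyCompacts X => coveringNumber δ (K : Set X)) :=
  stmt0_general δ
end

section
/- Let X be a compact metric space and δ > 0. The map sending a nonempty compact subset K of X to M_δ(K), the maximum cardinality of a collection of pairwise disjoint closed balls of radius δ with centres in K, is lower semicontinuous with respect to the Hausdorff metric on the space of nonempty compact subsets of X. -/
/-! In a compact space, "the closed `δ`-balls about `x ≠ y` are disjoint" is an open condition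
on `(x, y)`: its failure means some `z` is `δ`-close to both, and projecting away `z` is a
closed map. Hence a finite `δ`-packing of `K₀` survives moving each centre by less than some
`ε > 0`, and every `K` within Hausdorff distance `ε` of `K₀` contains such a moved copy. -/

open Set Metric Filter MeasureTheory TopologicalSpace

section Packing

variable {X : Type*} [MetricSpace X]

theorem isOpen_setOf_disjoint_closedBall [CompactSpace X] (δ : ℝ) :
    IsOpen {p : X × X | Disjoint (closedBall p.1 δ) (closedBall p.2 δ)} := by
  have hclosed : IsClosed {q : X × (X × X) | dist q.1 q.2.1 ≤ δ ∧ dist q.1 q.2.2 ≤ δ} :=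
    (isClosed_le (continuous_fst.dist continuous_snd.fst) continuous_const).inter
      (isClosed_le (continuous_fst.dist continuous_snd.snd) continuous_const)
  have hcompl : {p : X × X | Disjoint (closedBall p.1 δ) (closedBall p.2 δ)} =
      (Prod.snd '' {q : X × (X × X) | dist q.1 q.2.1 ≤ δ ∧ dist q.1 q.2.2 ≤ δ})ᶜ := by
    ext p
    simp [Set.disjoint_left, mem_closedBall]
  rw [hcompl]
  exact (isClosedMap_snd_of_compactSpace _ hclosed).isOpen_compl

theorem exists_pos_forall_dist_lt_pairwise_disjoint_closedBall_image [CompactSpace X]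
    {δ : ℝ} {S : Set X} (hS : S.Finite)
    (hpack : S.Pairwise fun x y => Disjoint (closedBall x δ) (closedBall y δ)) :
    ∃ ε > 0, ∀ g : X → X, (∀ x ∈ S, dist (g x) x < ε) →
      InjOn g S ∧ (g '' S).Pairwise fun x y => Disjoint (closedBall x δ) (closedBall y δ) := by
  set U := {p : X × X | p.1 ≠ p.2 ∧ Disjoint (closedBall p.1 δ) (closedBall p.2 δ)}
  have hU : IsOpen U :=
    (isOpen_ne_fun continuous_fst continuous_snd).inter (isOpen_setOf_disjoint_closedBall δ)
  have hSU : S.offDiag ⊆ U := fun p ⟨hp₁, hp₂, hne⟩ => ⟨hne, hpack hp₁ hp₂ hne⟩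
  obtain ⟨ε, hε, hthick⟩ := hS.offDiag.isCompact.exists_thickening_subset_open hU hSU
  refine ⟨ε, hε, fun g hg => ?_⟩
  have hgU : ∀ x ∈ S, ∀ y ∈ S, x ≠ y → (g x, g y) ∈ U := fun x hx y hy hne =>
    hthick <| mem_thickening_iff.2
      ⟨(x, y), ⟨hx, hy, hne⟩, by rw [Prod.dist_eq]; exact max_lt (hg x hx) (hg y hy)⟩
  have hinj : InjOn g S := fun x hx y hy hxy => by
    by_contra hne
    exact (hgU x hx y hy hne).1 hxy
  exact ⟨hinj, hinj.pairwise_image.2 fun x hx y hy hne => (hgU x hx y hy hne).2⟩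

theorem exists_finset_of_lt_packingNumber {δ : ℝ} {F : Set X} {m : ℕ∞}
    (hm : m < packingNumber δ F) :
    ∃ S : Finset X, (S : Set X) ⊆ F ∧
      (S : Set X).Pairwise (fun x y => Disjoint (closedBall x δ) (closedBall y δ)) ∧
      m < S.card := by
  obtain ⟨_, ⟨S, rfl, hSF, hS⟩, hmS⟩ := lt_sSup_iff.1 hm
  exact ⟨S, hSF, hS, hmS⟩

theorem card_le_packingNumber {δ : ℝ} {F : Set X} {S : Finset X} (hSF : (S : Set X) ⊆ F)
    (hS : (S : Set X).Pairwise fun x y => Disjoint (closedBall x δ) (closedBall y δ)) :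
    (S.card : ℕ∞) ≤ packingNumber δ F :=
  le_sSup ⟨S, rfl, hSF, hS⟩

end Packing

theorem NonemptyCompacts.exists_dist_lt_of_dist_lt {X : Type*} [MetricSpace X]
    {K L : NonemptyCompacts X} {r : ℝ} (h : dist K L < r) {x : X} (hx : x ∈ K) :
    ∃ y ∈ L, dist x y < r :=
  exists_dist_lt_of_hausdorffDist_lt hx h <|
    hausdorffEDist_ne_top_of_nonempty_of_bounded K.nonempty L.nonempty
      K.isCompact.isBounded L.isCompact.isBounded

theorem stmt1_general {X : Type*} [MetricSpace X] [CompactSpace X] (δ : ℝ) :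
    LowerSemicontinuous
      (fun K : TopologicalSpace.NonemptyCompacts X => packingNumber δ (K : Set X)) := by
  classical
  intro K₀ m hm
  obtain ⟨S, hSK₀, hS, hmS⟩ := exists_finset_of_lt_packingNumber hm
  obtain ⟨ε, hε, hstable⟩ :=
    exists_pos_forall_dist_lt_pairwise_disjoint_closedBall_image S.finite_toSet hS
  filter_upwards [ball_mem_nhds K₀ hε] with K hK
  have hnear : ∀ x ∈ S, ∃ y ∈ (K : Set X), dist y x < ε := fun x hx => by
    obtain ⟨y, hyK, hxy⟩ :=
      NonemptyCompacts.exists_dist_lt_of_dist_lt ((dist_comm K₀ K).trans_lt hK) (hSK₀ hx)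
    exact ⟨y, hyK, dist_comm x y ▸ hxy⟩
  choose! g hgK hgx using hnear
  obtain ⟨hinj, hpack⟩ := hstable g hgx
  calc m < S.card := hmS
    _ = (S.image g).card := by rw [Finset.card_image_of_injOn hinj]
    _ ≤ packingNumber δ (K : Set X) :=
      card_le_packingNumber (by simpa using mapsTo_iff_image_subset.1 hgK)
        (by simpa using hpack)

theorem stmt1 {X : Type*} [MetricSpace X] [CompactSpace X] (δ : ℝ) (hδ : 0 < δ) :
    LowerSemicontinuous
      (fun K : TopologicalSpace.NonemptyCompacts X => packingNumber δ (K : Set X)) :=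
  stmt1_general δ
end

section
/- Let X be an uncountable compact metric space and n ≥ 1. The set of functions f in C(X, ℝⁿ) such that the image f(X) has nonempty interior in ℝⁿ is dense in C(X, ℝⁿ) with the supremum metric. -/
open Set Metric Filter MeasureTheory TopologicalSpace

open Topology
noncomputable def psiB (b : ℕ → Bool) : ℝ := ∑' k, cond (b k) ((2:ℝ)⁻¹ ^ (k+1)) 0

lemma psiB_term_le (b : ℕ → Bool) (k : ℕ) :
    cond (b k) ((2:ℝ)⁻¹ ^ (k+1)) 0 ≤ (2:ℝ)⁻¹ ^ (k+1) := by
  cases b k <;> simp <;> positivity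

lemma psiB_term_nonneg (b : ℕ → Bool) (k : ℕ) :
    0 ≤ cond (b k) ((2:ℝ)⁻¹ ^ (k+1)) 0 := by
  cases b k <;> simp <;> positivity

lemma summable_geom_half : Summable (fun k : ℕ => (2:ℝ)⁻¹ ^ (k+1)) := by
  apply Summable.comp_injective (summable_geometric_of_lt_one (by norm_num) (by norm_num))
    (add_left_injective 1)

lemma tsum_geom_half : ∑' k : ℕ, (2:ℝ)⁻¹ ^ (k+1) = 1 := by
  have : ∀ k : ℕ, (2:ℝ)⁻¹ ^ (k+1) = 2⁻¹ * 2⁻¹ ^ k := fun k => by ring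
  simp only [this]
  rw [tsum_mul_left, tsum_geometric_of_lt_one (by norm_num) (by norm_num)]
  norm_num

lemma summable_psiB (b : ℕ → Bool) : Summable (fun k => cond (b k) ((2:ℝ)⁻¹ ^ (k+1)) 0) :=
  Summable.of_nonneg_of_le (psiB_term_nonneg b) (psiB_term_le b) summable_geom_half

lemma psiB_mem_Icc (b : ℕ → Bool) : psiB b ∈ Icc (0:ℝ) 1 := by
  constructor
  · exact tsum_nonneg (psiB_term_nonneg b)
  · rw [← tsum_geom_half]
    exact Summable.tsum_le_tsum (psiB_term_le b) (summable_psiB b) summable_geom_half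

lemma continuous_psiB : Continuous psiB := by
  apply continuous_tsum (u := fun k : ℕ => (2:ℝ)⁻¹ ^ (k+1))
  · intro k
    exact Continuous.comp (continuous_of_discreteTopology
      (f := fun t : Bool => cond t ((2:ℝ)⁻¹ ^ (k+1)) 0)) (continuous_apply k)
  · exact summable_geom_half
  · intro k b
    rw [Real.norm_eq_abs, abs_of_nonneg (psiB_term_nonneg b k)]
    exact psiB_term_le b k

lemma psiB_surj {t : ℝ} (ht : t ∈ Icc (0:ℝ) 1) : ∃ b : ℕ → Bool, psiB b = t := by
  set r : ℕ → ℝ := fun k =>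
    Nat.rec t (fun k rk => rk - (if (2:ℝ)⁻¹ ^ (k+1) ≤ rk then (2:ℝ)⁻¹ ^ (k+1) else 0)) k with hr
  have hr0 : r 0 = t := rfl
  have hrsucc : ∀ k, r (k+1) = r k - (if (2:ℝ)⁻¹ ^ (k+1) ≤ r k then (2:ℝ)⁻¹ ^ (k+1) else 0) :=
    fun k => rfl
  refine ⟨fun k => decide ((2:ℝ)⁻¹ ^ (k+1) ≤ r k), ?_⟩
  set b : ℕ → Bool := fun k => decide ((2:ℝ)⁻¹ ^ (k+1) ≤ r k) with hb
  have hinv : ∀ k, 0 ≤ r k ∧ r k ≤ (2:ℝ)⁻¹ ^ k := by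
    intro k; induction k with
    | zero => simpa [hr0] using ht
    | succ k ih =>
      have h2 : (2:ℝ)⁻¹ ^ k = 2 * (2:ℝ)⁻¹ ^ (k+1) := by rw [pow_succ]; ring
      rw [hrsucc]
      by_cases h : (2:ℝ)⁻¹ ^ (k+1) ≤ r k
      · rw [if_pos h]
        constructor
        · linarith
        · have := ih.2; linarith
      · rw [if_neg h]
        push_neg at h
        rw [sub_zero]; exact ⟨ih.1, h.le⟩
  have hpartial : ∀ N, ∑ k ∈ Finset.range N, cond (b k) ((2:ℝ)⁻¹ ^ (k+1)) 0 = t - r N := by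
    intro N; induction N with
    | zero => simp [hr0]
    | succ N ih =>
      rw [Finset.sum_range_succ, ih, hrsucc]
      simp only [hb, Bool.cond_decide]
      ring
  have hlim : Tendsto r atTop (nhds 0) := by
    apply tendsto_of_tendsto_of_tendsto_of_le_of_le tendsto_const_nhds
      (tendsto_pow_atTop_nhds_zero_of_lt_one (by norm_num : (0:ℝ) ≤ 2⁻¹) (by norm_num))
      (fun k => (hinv k).1) (fun k => (hinv k).2)
  have h1 : Tendsto (fun N => ∑ k ∈ Finset.range N, cond (b k) ((2:ℝ)⁻¹ ^ (k+1)) 0)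
      atTop (nhds (psiB b)) := (summable_psiB b).hasSum.tendsto_sum_nat
  have h2 : Tendsto (fun N => ∑ k ∈ Finset.range N, cond (b k) ((2:ℝ)⁻¹ ^ (k+1)) 0)
      atTop (nhds t) := by
    simp only [hpartial]
    simpa using (tendsto_const_nhds (x := t)).sub hlim
  exact tendsto_nhds_unique h1 h2

lemma phi_surj {n : ℕ} (hn : 0 < n) (t : Fin n → ℝ) (ht : ∀ i, t i ∈ Icc (0:ℝ) 1) :
    ∃ σ : ℕ → Bool, ∀ i : Fin n, psiB (fun k => σ (n * k + i)) = t i := by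
  choose b hb using fun i => psiB_surj (ht i)
  refine ⟨fun m => if h : m % n < n then b ⟨m % n, h⟩ (m / n) else false, fun i => ?_⟩
  have key : ∀ k : ℕ, (fun m => if h : m % n < n then b ⟨m % n, h⟩ (m / n) else false) (n * k + i)
      = b i k := by
    intro k
    have h1 : (n * k + (i : ℕ)) % n = i := by
      rw [Nat.mul_add_mod, Nat.mod_eq_of_lt i.isLt]
    have h2 : (n * k + (i : ℕ)) / n = k := by
      rw [Nat.mul_add_div hn, Nat.div_eq_of_lt i.isLt, add_zero]
    simp only [h1, h2, i.isLt, dif_pos, Fin.eta]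
  rw [show (fun k => (fun m => if h : m % n < n then b ⟨m % n, h⟩ (m / n) else false) (n * k + i))
      = b i from funext key]
  exact hb i

theorem stmt4 {X : Type*} [MetricSpace X] [CompactSpace X]
    (hX : ¬(Set.univ : Set X).Countable) (n : ℕ) (hn : 1 ≤ n) :
    Dense {f : C(X, Fin n → ℝ) | (interior (Set.range f)).Nonempty} := by
  have hnpos : 0 < n := hn
  rw [Metric.dense_iff]
  intro f ε hε
  -- Cantor set in X
  obtain ⟨j, -, hjc, hji⟩ := isClosed_univ.exists_nat_bool_injection_of_not_countable hX
  set σ₀ : ℕ → Bool := fun _ => false with hσ₀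
  set x₀ : X := j σ₀ with hx₀
  set U : Set X := f ⁻¹' (Metric.ball (f x₀) (ε/4)) with hU
  have hUopen : IsOpen U := (Metric.isOpen_ball).preimage f.continuous
  have hx₀U : x₀ ∈ U := by
    simp [hU, Metric.mem_ball, dist_self]
    positivity
  have hVopen : IsOpen (j ⁻¹' U) := hUopen.preimage hjc
  obtain ⟨I, u, hu, hpi⟩ := isOpen_pi_iff.mp hVopen σ₀ hx₀U
  set N : ℕ := (I.sup id) + 1 with hN
  have hIlt : ∀ k ∈ I, k < N := fun k hk =>
    Nat.lt_succ_of_le (Finset.le_sup (f := id) hk)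
  set e : (ℕ → Bool) → (ℕ → Bool) := fun σ k => if k < N then false else σ (k - N) with he
  have he_cont : Continuous e := by
    refine continuous_pi fun k => ?_
    by_cases hk : k < N
    · simp only [he, hk, if_true]; exact continuous_const
    · simp only [he, hk, if_false]; exact continuous_apply _
  have he_inj : Function.Injective e := by
    intro σ τ hστ
    funext m
    have := congr_fun hστ (m + N)
    simpa [he, Nat.add_sub_cancel] using this
  have he_mem : ∀ σ, e σ ∈ j ⁻¹' U := by
    intro σ
    apply hpi
    intro k hk
    have : e σ k = σ₀ k := by simp [he, hIlt k hk, hσ₀]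
    rw [this]
    exact (hu k hk).2
  set h : (ℕ → Bool) → X := j ∘ e with hh
  have hh_cont : Continuous h := hjc.comp he_cont
  have hh_inj : Function.Injective h := hji.comp he_inj
  have hh_emb : IsClosedEmbedding h := hh_cont.isClosedEmbedding hh_inj
  set K : Set X := Set.range h with hK
  have hKcomp : IsCompact K := isCompact_range hh_cont
  have hKU : K ⊆ U := by rintro x ⟨σ, rfl⟩; exact he_mem σ
  -- Tietze extensions of the coordinates of the Cantor→cube map
  have hc_cont : ∀ i : Fin n, Continuous (fun σ : ℕ → Bool => psiB (fun k => σ (n * k + i))) :=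
    fun i => continuous_psiB.comp (continuous_pi fun k => continuous_apply _)
  have htz := fun i : Fin n =>
    ContinuousMap.exists_extension_forall_mem_of_isClosedEmbedding
      (⟨_, hc_cont i⟩ : C(ℕ → Bool, ℝ)) (fun σ => psiB_mem_Icc _)
      (nonempty_Icc.2 zero_le_one) hh_emb
  choose G hG1 hG2 using htz
  -- Urysohn function
  obtain ⟨v, hv0, hv1, hv01⟩ := exists_continuous_zero_one_of_isClosed
    hUopen.isClosed_compl hKcomp.isClosed
    (Set.disjoint_left.mpr fun x hxc hxK => hxc (hKU hxK))
  -- the approximating map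
  set T : X → Fin n → ℝ :=
    fun x i => f x i + v x * ((f x₀ i + (ε/4) * (2 * G i x - 1)) - f x i) with hT
  have hTc : Continuous T := by
    refine continuous_pi fun i => ?_
    have hfi : Continuous fun x => f x i := (continuous_apply i).comp f.continuous
    have hGi := (G i).continuous
    have hvc := v.continuous
    fun_prop
  set g : C(X, Fin n → ℝ) := ⟨T, hTc⟩ with hg
  refine ⟨g, ?_, ?_⟩
  · -- dist g f < ε
    rw [Metric.mem_ball, ContinuousMap.dist_lt_iff hε]
    intro x
    rw [dist_pi_lt_iff hε]
    intro i
    have hrw : g x i - f x i = v x * ((f x₀ i + (ε/4) * (2 * G i x - 1)) - f x i) := by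
      simp only [hg, ContinuousMap.coe_mk, hT]; ring
    rw [Real.dist_eq, hrw]
    by_cases hxU : x ∈ U
    · have h1 : |v x| ≤ 1 := abs_le.mpr ⟨by linarith [(hv01 x).1], (hv01 x).2⟩
      have h2 : |2 * G i x - 1| ≤ 1 :=
        abs_le.mpr ⟨by linarith [(hG1 i x).1], by linarith [(hG1 i x).2]⟩
      have h3 : |f x₀ i - f x i| < ε/4 := by
        have hd := dist_le_pi_dist (f x) (f x₀) i
        have hb : dist (f x) (f x₀) < ε/4 := by
          simpa [hU, Metric.mem_ball] using hxU
        calc |f x₀ i - f x i| = dist (f x i) (f x₀ i) := by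
              rw [Real.dist_eq, abs_sub_comm]
          _ ≤ dist (f x) (f x₀) := hd
          _ < ε/4 := hb
      have h4 : |(f x₀ i + (ε/4) * (2 * G i x - 1)) - f x i| < ε/2 := by
        have := abs_add_le (f x₀ i - f x i) ((ε/4) * (2 * G i x - 1))
        have h5 : |(ε/4) * (2 * G i x - 1)| ≤ ε/4 := by
          rw [abs_mul, abs_of_pos (by positivity : (0:ℝ) < ε/4)]
          nlinarith
        have h6 : (f x₀ i + (ε/4) * (2 * G i x - 1)) - f x i
            = (f x₀ i - f x i) + ((ε/4) * (2 * G i x - 1)) := by ring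
        rw [h6]
        calc |(f x₀ i - f x i) + ((ε/4) * (2 * G i x - 1))|
            ≤ |f x₀ i - f x i| + |(ε/4) * (2 * G i x - 1)| := abs_add_le _ _
          _ < ε/4 + ε/4 := by linarith
          _ = ε/2 := by ring
      rw [abs_mul]
      nlinarith [abs_nonneg (v x), abs_nonneg ((f x₀ i + (ε/4) * (2 * G i x - 1)) - f x i)]
    · have hvx : v x = 0 := hv0 hxU
      rw [hvx]
      simpa using hε
  · -- the image contains a ball
    have hsub : Metric.closedBall (f x₀) (ε/4) ⊆ Set.range ⇑g := by
      intro y hy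
      have hyi : ∀ i, |y i - f x₀ i| ≤ ε/4 := by
        intro i
        have hd := dist_le_pi_dist y (f x₀) i
        rw [Metric.mem_closedBall] at hy
        calc |y i - f x₀ i| = dist (y i) (f x₀ i) := (Real.dist_eq _ _).symm
          _ ≤ dist y (f x₀) := hd
          _ ≤ ε/4 := hy
      set t : Fin n → ℝ := fun i => (y i - f x₀ i + ε/4)/(ε/2) with ht'
      have htIcc : ∀ i, t i ∈ Icc (0:ℝ) 1 := by
        intro i
        have hi := abs_le.mp (hyi i)
        constructor
        · apply div_nonneg
          · linarith [hi.1]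
          · linarith
        · rw [div_le_one (by linarith : (0:ℝ) < ε/2)]
          linarith [hi.2]
      obtain ⟨σ, hσ⟩ := phi_surj hnpos t htIcc
      refine ⟨h σ, ?_⟩
      funext i
      have hvK : v (h σ) = 1 := by simpa using hv1 ⟨σ, rfl⟩
      have hGσ : G i (h σ) = t i := by
        have := congr_fun (hG2 i) σ
        simp only [Function.comp_apply, ContinuousMap.coe_mk] at this
        rw [this]
        exact hσ i
      show T (h σ) i = y i
      rw [hT]
      simp only [hvK, hGσ, one_mul]
      rw [ht']
      field_simp
      ring
    refine ⟨f x₀, ?_⟩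
    have hball : Metric.ball (f x₀) (ε/4) ⊆ interior (Set.range ⇑g) :=
      interior_maximal (Metric.ball_subset_closedBall.trans hsub) Metric.isOpen_ball
    exact hball (Metric.mem_ball_self (by positivity))
end

section
/- Let X be an uncountable compact metric space, n ≥ 1, and suppose the topological dimension of X is strictly less than n. Then the set of functions f in C(X, ℝⁿ) such that the n-dimensional packing measure (equivalently, n-dimensional Lebesgue measure) of f(X) is positive is meagre in C(X, ℝⁿ). -/
open Set Metric Filter MeasureTheory TopologicalSpace

/-! Take an open cover of `X` of multiplicity at most `n` refining the preimages of the
`ε/2`-balls under `f`, and a partition of unity `ρ` subordinate to it. The map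
`x ↦ ∑ⱼ ρⱼ(x) cⱼ`, with `cⱼ` the centres of those balls, is `ε`-close to `f` and takes values in
finitely many convex hulls of at most `n` points, which are Lebesgue-null; so maps with null image
are dense. Since `f ↦ vol (f(X))` is upper semicontinuous (outer regularity of Lebesgue measure and
compactness of `f(X)`), each set `{f | 1/k ≤ vol (f(X))}` is closed with dense complement. -/

open scoped ENNReal
open Module

lemma UpperSemicontinuous.isMeagre_setOf_pos {Y : Type*} [TopologicalSpace Y] {Φ : Y → ℝ≥0∞}
    (hΦ : UpperSemicontinuous Φ) (hdense : Dense {y | Φ y = 0}) : IsMeagre {y | 0 < Φ y} := by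
  have hcover : {y | 0 < Φ y} ⊆ ⋃ k : ℕ, Φ ⁻¹' Ici (k : ℝ≥0∞)⁻¹ := fun y hy =>
    mem_iUnion.2 ((ENNReal.exists_inv_nat_lt hy.ne').imp fun _ => le_of_lt)
  refine (isMeagre_iUnion fun k => IsNowhereDense.isMeagre ?_).mono hcover
  rw [(hΦ.isClosed_preimage _).isNowhereDense_iff, interior_eq_empty_iff_dense_compl]
  refine hdense.mono fun y (hy : Φ y = 0) => ?_
  simp [hy, ENNReal.natCast_ne_top]

lemma upperSemicontinuous_measure_range {X E : Type*} [TopologicalSpace X] [CompactSpace X]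
    [PseudoMetricSpace E] [MeasurableSpace E] (μ : Measure E) [μ.OuterRegular] :
    UpperSemicontinuous fun f : C(X, E) => μ (range f) := by
  intro f a ha
  obtain ⟨O, hfO, hO, hμO⟩ := Set.exists_isOpen_lt_of_lt _ _ ha
  obtain ⟨δ, hδ, hδO⟩ := (isCompact_range f.continuous).exists_thickening_subset_open hO hfO
  filter_upwards [ball_mem_nhds f hδ] with g hg
  refine (measure_mono ?_).trans_lt hμO
  rintro _ ⟨x, rfl⟩
  exact hδO (mem_thickening_iff.2
    ⟨f x, mem_range_self x, (ContinuousMap.dist_apply_le_dist x).trans_lt hg⟩)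

section HaarNull

variable {E : Type*} [NormedAddCommGroup E] [NormedSpace ℝ E]

lemma affineSpan_ne_top_of_card_le (s : Finset E) (hs : s.card ≤ finrank ℝ E) :
    affineSpan ℝ (s : Set E) ≠ ⊤ := by
  classical
  rcases s.eq_empty_or_nonempty with rfl | hne
  · simp
  obtain ⟨m, hm⟩ : ∃ m, s.card = m + 1 := ⟨s.card - 1, by have := hne.card_pos; omega⟩
  intro htop
  have hrank := finrank_vectorSpan_image_finset_le ℝ id s hm
  rw [Finset.image_id, ← direction_affineSpan, htop, AffineSubspace.direction_top,
    finrank_top] at hrank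
  omega

variable [FiniteDimensional ℝ E] [MeasurableSpace E] [BorelSpace E]
  (μ : Measure E) [μ.IsAddHaarMeasure]

lemma measure_convexHull_eq_zero_of_card_le (s : Finset E) (hs : s.card ≤ finrank ℝ E) :
    μ (convexHull ℝ (s : Set E)) = 0 :=
  measure_mono_null (convexHull_subset_affineSpan _)
    (Measure.addHaar_affineSubspace μ _ (affineSpan_ne_top_of_card_le s hs))

lemma measure_eq_zero_of_forall_mem_convexHull (W : Finset E) {S : Set E}
    (hS : ∀ y ∈ S, ∃ s ⊆ W, s.card ≤ finrank ℝ E ∧ y ∈ convexHull ℝ (s : Set E)) : μ S = 0 := by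
  classical
  set P := W.powerset.filter (·.card ≤ finrank ℝ E)
  have hSP : S ⊆ ⋃ s ∈ P, convexHull ℝ (s : Set E) := fun y hy => by
    obtain ⟨s, hsW, hs, hys⟩ := hS y hy
    exact mem_biUnion (Finset.mem_filter.2 ⟨Finset.mem_powerset.2 hsW, hs⟩) hys
  refine measure_mono_null hSP ((measure_biUnion_null_iff P.countable_toSet).2 fun s hs => ?_)
  exact measure_convexHull_eq_zero_of_card_le μ s (Finset.mem_filter.1 hs).2

end HaarNull

lemma exists_finite_refinement_of_covDim_lt {X : Type*} [TopologicalSpace X] [CompactSpace X]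
    {n : ℕ} (hdim : covDim X < n) {ι : Type} (U : ι → Set X) (hU : ∀ i, IsOpen (U i))
    (hcover : ⋃ i, U i = univ) :
    ∃ (κ : Type) (V : κ → Set X), Finite κ ∧ (∀ j, IsOpen (V j)) ∧ univ ⊆ ⋃ j, V j ∧
      (∀ j, ∃ i, V j ⊆ U i) ∧ ∀ x (s : Finset κ), (∀ j ∈ s, x ∈ V j) → s.card ≤ n := by
  obtain ⟨m, hm, hmn⟩ := sInf_lt_iff.mp hdim
  obtain ⟨κ, V, hVo, hVcover, hVU, hmult⟩ := hm ι U hU hcover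
  obtain ⟨t, ht⟩ := isCompact_univ.elim_finite_subcover V hVo hVcover.ge
  refine ⟨t, fun j => V j, inferInstance, fun j => hVo j, fun x _ => ?_, fun j => hVU j,
    fun x s hs => ?_⟩
  · obtain ⟨j, hj, hxj⟩ := mem_iUnion₂.1 (ht (mem_univ x))
    exact mem_iUnion.2 ⟨⟨j, hj⟩, hxj⟩
  have hsx : ((s.map (Function.Embedding.subtype _) : Finset κ) : Set κ) ⊆ {j | x ∈ V j} := by
    intro j hj
    obtain ⟨j', hj', rfl⟩ := Finset.mem_map.1 hj
    exact hs j' hj'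
  have := (Set.encard_le_encard hsx).trans ((hmult x).trans (Order.add_one_le_of_lt hmn))
  rw [Set.encard_coe_eq_coe_finsetCard, Finset.card_map] at this
  exact_mod_cast this

-- `E : Type` because the cover by preimages of balls is indexed by `E`, and `covDim` only
-- quantifies over index types in `Type`.
lemma exists_dist_lt_forall_mem_convexHull {X : Type*} [TopologicalSpace X] [CompactSpace X]
    [T2Space X] {E : Type} [NormedAddCommGroup E] [NormedSpace ℝ E] {n : ℕ}
    (hdim : covDim X < n) (f : C(X, E)) {ε : ℝ} (hε : 0 < ε) :
    ∃ g : C(X, E), dist g f < ε ∧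
      ∃ W : Finset E, ∀ x, ∃ s ⊆ W, s.card ≤ n ∧ g x ∈ convexHull ℝ (s : Set E) := by
  classical
  obtain ⟨κ, V, _, hVo, hVcover, hVU, hmult⟩ := exists_finite_refinement_of_covDim_lt hdim
    (fun y => f ⁻¹' ball y (ε / 2)) (fun y => isOpen_ball.preimage f.continuous)
    (eq_univ_of_forall fun x => mem_iUnion.2 ⟨f x, mem_ball_self (half_pos hε)⟩)
  have := Fintype.ofFinite κ
  choose c hc using hVU
  obtain ⟨ρ, hρ⟩ := PartitionOfUnity.exists_isSubordinate isClosed_univ V hVo hVcover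
  have hρV : ∀ j x, ρ j x ≠ 0 → x ∈ V j := fun j x h => hρ j (subset_tsupport _ h)
  let g : C(X, E) := ⟨fun x => ∑ᶠ j, ρ j x • c j,
    ρ.continuous_finsum_smul fun _ _ _ => continuousAt_const⟩
  refine ⟨g, (ContinuousMap.dist_lt_iff hε).2 fun x => ?_, Finset.univ.image c, fun x => ?_⟩
  · have : g x ∈ closedBall (f x) (ε / 2) :=
      ρ.finsum_smul_mem_convex (g := fun j _ => c j) (mem_univ x)
        (fun j hj => mem_closedBall_comm.1 (ball_subset_closedBall (hc j (hρV j x hj))))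
        (convex_closedBall _ _)
    exact (mem_closedBall.1 this).trans_lt (half_lt_self hε)
  · let s := Finset.univ.filter (ρ · x ≠ 0)
    have hs : ∀ j ∈ s, x ∈ V j := fun j hj => hρV j x (Finset.mem_filter.1 hj).2
    refine ⟨s.image c, Finset.image_subset_image s.subset_univ,
      Finset.card_image_le.trans (hmult x s hs), ?_⟩
    exact ρ.finsum_smul_mem_convex (g := fun j _ => c j) (mem_univ x)
      (fun j hj => subset_convexHull ℝ _ (Finset.mem_image_of_mem c (by simpa [s] using hj)))
      (convex_convexHull ℝ _)

lemma dense_setOf_measure_range_eq_zero {X : Type*} [TopologicalSpace X] [CompactSpace X]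
    [T2Space X] {E : Type} [NormedAddCommGroup E] [NormedSpace ℝ E] [FiniteDimensional ℝ E]
    [MeasurableSpace E] [BorelSpace E] (μ : Measure E) [μ.IsAddHaarMeasure]
    (hdim : covDim X < finrank ℝ E) : Dense {f : C(X, E) | μ (range f) = 0} := by
  refine Metric.dense_iff.2 fun f ε hε => ?_
  obtain ⟨g, hgf, W, hW⟩ := exists_dist_lt_forall_mem_convexHull hdim f hε
  exact ⟨g, mem_ball.2 hgf, measure_eq_zero_of_forall_mem_convexHull μ W (forall_mem_range.2 hW)⟩

theorem stmt12_general {X : Type*} [MetricSpace X] [CompactSpace X]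
    (n : ℕ)
    (hdim : covDim X < (n : ℕ∞)) :
    IsMeagre {f : C(X, Fin n → ℝ) | 0 < MeasureTheory.volume (Set.range f)} := by
  rw [← finrank_fin_fun ℝ (n := n)] at hdim
  exact (upperSemicontinuous_measure_range volume).isMeagre_setOf_pos
    (dense_setOf_measure_range_eq_zero volume hdim)

theorem stmt12 {X : Type*} [MetricSpace X] [CompactSpace X]
    (hX : ¬(Set.univ : Set X).Countable) (n : ℕ) (hn : 1 ≤ n)
    (hdim : covDim X < (n : ℕ∞)) :
    IsMeagre {f : C(X, Fin n → ℝ) | 0 < MeasureTheory.volume (Set.range f)} :=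
  stmt12_general n hdim
end

section
/- Let W = {y ∈ ℝⁿ : y₁ = ⋯ = yₜ = 0} for 1 ≤ t < n, and let F ⊆ ℝⁿ be a compact set such that the t-dimensional Hausdorff measure restricted to F is σ-finite. Then for Hᵗ-almost every y ∈ ℝᵗ (identifying ℝᵗ with W^⊥), the intersection F ∩ (W + y) is at most countable. -/
open Set Metric Filter MeasureTheory TopologicalSpace

/-
Fix a piece `A` of `F` with `μHᵗ A < ∞`. For each `k`, cover `A` by sets `E j` of diameter at
most `1/k` with `∑ diam (E j) ^ t ≤ μHᵗ A + 1`. The projection `π` onto the first `t` coordinates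
is 1-Lipschitz and `vol B ≤ diam B ^ t` in the sup metric, so the function counting the `j` with
`y ∈ π '' E j` has integral at most `μHᵗ A + 1`. Points of `A ∩ π⁻¹ {y}` lie in distinct `E j` as
soon as `1/k` is below their mutual distances, so the liminf over `k` of these counts dominates
the cardinality of every fibre, and by Fatou it is finite almost everywhere. Since `μHᵗ = vol` on
`ℝᵗ`, σ-finiteness then gives countable fibres of `F` for `μHᵗ`-almost every `y`.
-/

open scoped ENNReal NNReal

theorem exists_cover_tsum_lt_of_hausdorffMeasure_lt {X : Type*} [EMetricSpace X]
    [MeasurableSpace X] [BorelSpace X] {d : ℝ} {A : Set X} {c : ℝ≥0∞} (hc : μH[d] A < c)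
    {r : ℝ≥0∞} (hr : 0 < r) :
    ∃ E : ℕ → Set X, A ⊆ ⋃ j, E j ∧ (∀ j, ediam (E j) ≤ r) ∧
      ∑' j, ⨆ _ : (E j).Nonempty, ediam (E j) ^ d < c := by
  rw [Measure.hausdorffMeasure_apply] at hc
  have h := (le_iSup₂ (f := fun (r : ℝ≥0∞) (_ : 0 < r) => ⨅ (E : ℕ → Set X)
    (_ : A ⊆ ⋃ j, E j) (_ : ∀ j, ediam (E j) ≤ r),
      ∑' j, ⨆ _ : (E j).Nonempty, ediam (E j) ^ d) r hr).trans_lt hc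
  simpa only [iInf_lt_iff, exists_prop] using h

theorem Set.subsingleton_inter_of_ediam_lt_einfsep {X : Type*} [EMetricSpace X] {S E : Set X}
    (h : ediam E < S.einfsep) : (S ∩ E).Subsingleton := fun x hx x' hx' => by
  by_contra hne
  exact ((einfsep_le_edist_of_mem hx.1 hx'.1 hne).trans
    (edist_le_ediam_of_mem hx.2 hx'.2)).not_gt h

theorem LipschitzWith.volume_image_le {X ι : Type*} [PseudoEMetricSpace X] [Fintype ι]
    {K : ℝ≥0} {f : X → ι → ℝ} (hf : LipschitzWith K f) (E : Set X) :
    volume (f '' E) ≤ K ^ Fintype.card ι * ediam E ^ Fintype.card ι :=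
  calc volume (f '' E) ≤ ediam (f '' E) ^ Fintype.card ι := Real.volume_pi_le_diam_pow _
    _ ≤ (K * ediam E) ^ Fintype.card ι := by gcongr; exact hf.ediam_image_le E
    _ = _ := mul_pow ..

theorem lipschitzWith_one_comp_right {ι κ : Type*} [Fintype ι] [Fintype κ] (σ : κ → ι) :
    LipschitzWith 1 fun x : ι → ℝ => x ∘ σ :=
  LipschitzWith.of_edist_le fun x y => edist_pi_le_iff.2 fun j => edist_le_pi_edist x y (σ j)

section CoverMultiplicity

variable {X ι : Type*} [Fintype ι]

/-- Counts the `j` with `y ∈ f '' E j`, using measurable hulls of the images so that the count is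
measurable in `y`. -/
noncomputable def coverMultiplicity (f : X → ι → ℝ) (E : ℕ → Set X) (y : ι → ℝ) : ℝ≥0∞ :=
  ∑' j, (toMeasurable volume (f '' E j)).indicator 1 y

theorem measurable_coverMultiplicity (f : X → ι → ℝ) (E : ℕ → Set X) :
    Measurable (coverMultiplicity f E) :=
  Measurable.tsum fun _ => measurable_one.indicator (measurableSet_toMeasurable _ _)

theorem LipschitzWith.lintegral_coverMultiplicity_le [PseudoEMetricSpace X] {K : ℝ≥0}
    {f : X → ι → ℝ} (hf : LipschitzWith K f) (E : ℕ → Set X) :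
    ∫⁻ y, coverMultiplicity f E y ≤
      K ^ Fintype.card ι * ∑' j, ⨆ _ : (E j).Nonempty, ediam (E j) ^ (Fintype.card ι : ℝ) := by
  simp only [coverMultiplicity]
  rw [lintegral_tsum fun _ => (measurable_one.indicator
    (measurableSet_toMeasurable _ _)).aemeasurable, ← ENNReal.tsum_mul_left]
  refine ENNReal.tsum_le_tsum fun j => ?_
  rw [lintegral_indicator_one (measurableSet_toMeasurable _ _), measure_toMeasurable]
  rcases (E j).eq_empty_or_nonempty with hE | hE
  · simp [hE]
  · rw [iSup_pos hE, ENNReal.rpow_natCast]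
    exact hf.volume_image_le _

theorem encard_le_coverMultiplicity {f : X → ι → ℝ} {E : ℕ → Set X} {S : Set X} {y : ι → ℝ}
    (hSy : S ⊆ f ⁻¹' {y}) (hcov : S ⊆ ⋃ j, E j) (hsep : ∀ j, (S ∩ E j).Subsingleton) :
    (S.encard : ℝ≥0∞) ≤ coverMultiplicity f E y := by
  choose! idx hidx using fun x (hx : x ∈ S) => mem_iUnion.1 (hcov hx)
  have hinj : InjOn idx S := fun x hx x' hx' h =>
    hsep (idx x) ⟨hx, hidx x hx⟩ ⟨hx', h ▸ hidx x' hx'⟩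
  calc (S.encard : ℝ≥0∞) = (idx '' S).encard := by rw [hinj.encard_image]
    _ = ∑' k, (idx '' S).indicator 1 k := by rw [← ENNReal.tsum_set_one]; exact tsum_subtype _ 1
    _ ≤ coverMultiplicity f E y := ENNReal.tsum_le_tsum <| indicator_le ?_
  rintro _ ⟨x, hx, rfl⟩
  have hy : y ∈ f '' E (idx x) := ⟨x, hidx x hx, hSy hx⟩
  rw [indicator_of_mem (subset_toMeasurable _ _ hy), Pi.one_apply, Pi.one_apply]

theorem encard_le_liminf_coverMultiplicity [EMetricSpace X] {f : X → ι → ℝ} {A : Set X}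
    {E : ℕ → ℕ → Set X} (hcov : ∀ k, A ⊆ ⋃ j, E k j) (hdiam : ∀ k j, ediam (E k j) ≤ (k : ℝ≥0∞)⁻¹)
    {y : ι → ℝ} {S : Set X} (hS : S.Finite) (hSA : S ⊆ A ∩ f ⁻¹' {y}) :
    (S.encard : ℝ≥0∞) ≤ liminf (fun k => coverMultiplicity f (E k) y) atTop := by
  obtain ⟨k₀, hk₀⟩ := ENNReal.exists_inv_nat_lt hS.einfsep_pos.ne'
  refine le_liminf_of_le (by isBoundedDefault) ?_
  filter_upwards [eventually_ge_atTop k₀] with k hk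
  refine encard_le_coverMultiplicity (fun x hx => (hSA hx).2)
    (fun x hx => hcov k (hSA hx).1) fun j => subsingleton_inter_of_ediam_lt_einfsep ?_
  calc ediam (E k j) ≤ (k : ℝ≥0∞)⁻¹ := hdiam k j
    _ ≤ (k₀ : ℝ≥0∞)⁻¹ := ENNReal.inv_le_inv.2 (Nat.cast_le.2 hk)
    _ < S.einfsep := hk₀

end CoverMultiplicity

section Slices

variable {X ι : Type*} [EMetricSpace X] [MeasurableSpace X] [BorelSpace X] [Fintype ι]

theorem LipschitzWith.ae_finite_inter_preimage {K : ℝ≥0} {f : X → ι → ℝ}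
    (hf : LipschitzWith K f) {A : Set X} (hA : μH[Fintype.card ι] A ≠ ∞) :
    ∀ᵐ y, (A ∩ f ⁻¹' {y}).Finite := by
  choose E hcov hdiam hsum using fun k : ℕ => exists_cover_tsum_lt_of_hausdorffMeasure_lt
    (ENNReal.lt_add_right hA one_ne_zero) (ENNReal.inv_pos.2 (ENNReal.natCast_ne_top k))
  set G := fun y => liminf (fun k => coverMultiplicity f (E k) y) atTop
  have hG : ∫⁻ y, G y ≠ ∞ := by
    refine ne_top_of_le_ne_top (b := K ^ Fintype.card ι * (μH[Fintype.card ι] A + 1))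
      (ENNReal.mul_ne_top (by simp) (by simpa using hA)) ?_
    calc ∫⁻ y, G y ≤ liminf (fun k => ∫⁻ y, coverMultiplicity f (E k) y) atTop :=
          lintegral_liminf_le fun k => measurable_coverMultiplicity f (E k)
      _ ≤ _ := liminf_le_of_frequently_le' <| Frequently.of_forall fun k =>
          (hf.lintegral_coverMultiplicity_le _).trans (by gcongr; exact (hsum k).le)
  filter_upwards [ae_lt_top (Measurable.liminf fun k => measurable_coverMultiplicity f (E k)) hG]
    with y hy
  by_contra hinf
  refine hy.ne (ENNReal.eq_top_of_forall_nnreal_le fun r => ?_)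
  obtain ⟨S, hS, hScard⟩ := exists_subset_encard_eq
    ((le_top : (⌈r⌉₊ : ℕ∞) ≤ ⊤).trans_eq (encard_eq_top_iff.2 hinf).symm)
  calc (r : ℝ≥0∞) ≤ ⌈r⌉₊ := by exact_mod_cast Nat.le_ceil r
    _ = S.encard := by rw [hScard]; rfl
    _ ≤ G y := encard_le_liminf_coverMultiplicity hcov hdiam
        (finite_of_encard_eq_coe hScard) hS

theorem LipschitzWith.ae_countable_inter_preimage {K : ℝ≥0} {f : X → ι → ℝ}
    (hf : LipschitzWith K f) (F : Set X)
    [SigmaFinite ((μH[Fintype.card ι] : Measure X).restrict F)] :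
    ∀ᵐ y, (F ∩ f ⁻¹' {y}).Countable := by
  set μ := (μH[Fintype.card ι] : Measure X).restrict F
  have hfin : ∀ k, μH[Fintype.card ι] (spanningSets μ k ∩ F) ≠ ∞ := fun k => by
    rw [← Measure.restrict_apply (measurableSet_spanningSets μ k)]
    exact (measure_spanningSets_lt_top μ k).ne
  filter_upwards [ae_all_iff.2 fun k => hf.ae_finite_inter_preimage (hfin k)] with y hy
  rw [← univ_inter F, ← iUnion_spanningSets μ, iUnion_inter, iUnion_inter]
  exact countable_iUnion fun k => (hy k).countable

end Slices

theorem preimage_comp_castLE_eq_image_add {n t : ℕ} (htn : t ≤ n) (y : Fin t → ℝ) :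
    (fun x : Fin n → ℝ => x ∘ Fin.castLE htn) ⁻¹' {y} =
      (fun w => w + fun i : Fin n => if h : (i : ℕ) < t then y ⟨i, h⟩ else 0) ''
        {w : Fin n → ℝ | ∀ i : Fin n, (i : ℕ) < t → w i = 0} := by
  ext x
  simp only [mem_preimage, mem_singleton_iff, mem_image, mem_ofPred_eq]
  constructor
  · rintro rfl
    refine ⟨fun i => if (i : ℕ) < t then 0 else x i, fun i hi => if_pos hi, funext fun i => ?_⟩
    by_cases hi : (i : ℕ) < t <;> simp [hi]
  · rintro ⟨w, hw, rfl⟩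
    funext j
    simp [hw (Fin.castLE htn j) j.2]

theorem stmt18_general (n t : ℕ) (htn : t < n)
    (F : Set (Fin n → ℝ))
    (hsf : MeasureTheory.SigmaFinite
      ((μH[(t : ℝ)] : MeasureTheory.Measure (Fin n → ℝ)).restrict F)) :
    ∀ᵐ y ∂(μH[(t : ℝ)] : MeasureTheory.Measure (Fin t → ℝ)),
      (F ∩ ((fun w => w + fun i : Fin n => if h : (i : ℕ) < t then y ⟨i, h⟩ else 0) ''
        {w : Fin n → ℝ | ∀ i : Fin n, (i : ℕ) < t → w i = 0})).Countable := by
  have hvol : (μH[(t : ℝ)] : Measure (Fin t → ℝ)) = volume := by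
    simpa using hausdorffMeasure_pi_real (ι := Fin t)
  have : SigmaFinite ((μH[(Fintype.card (Fin t) : ℝ)] : Measure (Fin n → ℝ)).restrict F) := by
    rwa [Fintype.card_fin]
  rw [hvol]
  filter_upwards [(lipschitzWith_one_comp_right (Fin.castLE htn.le)).ae_countable_inter_preimage F]
    with y hy
  rwa [← preimage_comp_castLE_eq_image_add]

theorem stmt18 (n t : ℕ) (ht : 1 ≤ t) (htn : t < n)
    (F : Set (Fin n → ℝ)) (hF : IsCompact F)
    (hsf : MeasureTheory.SigmaFinite
      ((μH[(t : ℝ)] : MeasureTheory.Measure (Fin n → ℝ)).restrict F)) :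
    ∀ᵐ y ∂(μH[(t : ℝ)] : MeasureTheory.Measure (Fin t → ℝ)),
      (F ∩ ((fun w => w + fun i : Fin n => if h : (i : ℕ) < t then y ⟨i, h⟩ else 0) ''
        {w : Fin n → ℝ | ∀ i : Fin n, (i : ℕ) < t → w i = 0})).Countable :=
  stmt18_general n t htn F hsf
end
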